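/- If w[k..j] is the lexicographically greatest proper suffix of the factor of a run of smallest period p, then the prefix w[k..k+p-1] of length p is border-free (it has no proper nonempty border). -/

import Mathlib

open List

universe u

/-- The factor `w[i..j]` of a word (inclusive positions). -/
def factor {α : Type u} (w : List α) (i j : ℕ) : List α := (w.drop i).take (j - i + 1)

/-- `p` is a period length of the word `u`. -/
def HasPeriodLen {α : Type u} (u : List α) (p : ℕ) : Prop :=
  1 ≤ p ∧ ∀ k, k + p < u.length → u[k]? = u[k + p]?

/-- The smallest period of a word. -/
noncomputable def minPeriod {α : Type u} (u : List α) : ℕ := sInf {p | HasPeriodLen u p}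

/-- `[i..j]` is a run in `w`: the factor is periodic with smallest period at most half
its length, and the periodicity extends neither to the left nor to the right. -/
def IsRun {α : Type u} (w : List α) (i j : ℕ) : Prop :=
  i < j ∧ j < w.length ∧
  2 * minPeriod (factor w i j) ≤ j - i + 1 ∧
  (0 < i → minPeriod (factor w i j) < minPeriod (factor w (i - 1) j)) ∧
  (j + 1 < w.length → minPeriod (factor w i j) < minPeriod (factor w i (j + 1)))
/-- A border of `u`: a nonempty proper prefix that is also a suffix. -/
def IsBorder {α : Type u} (b u : List α) : Prop := b ≠ [] ∧ b ≠ u ∧ b <+: u ∧ b <:+ u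

/-- A word is border-free if it has no border. -/
def BorderFree {α : Type u} (u : List α) : Prop := ∀ b, ¬ IsBorder b u
/-- `k` is the starting position of the greatest proper suffix of the factor `w[i..j]`,
with respect to the strict order `lt` on words. -/
def IsGreatestProperSuffixPos {α : Type u} (lt : List α → List α → Prop)
    (w : List α) (i j k : ℕ) : Prop :=
  i < k ∧ k ≤ j ∧ ∀ k', i < k' → k' ≤ j → k' ≠ k → lt (factor w k' j) (factor w k j)


/-!
Let `v` be the factor of the run, `p` its smallest period and `r` its length-`p` prefix. Every
length-`p` factor of `v` starting at a position `e ≤ p` is the rotation of `r` by `e`. In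
particular `u = w[k..k+p-1]` is such a rotation, and its nontrivial rotations are the length-`p`
prefixes of the other proper suffixes of `v` starting at positions `≤ p`; maximality of `w[k..j]`
makes them all `≤ u`, and they differ from `u` because a rotation fixing `r` would be a period of
`v` smaller than `p`. A word strictly greater than all its nontrivial rotations is border-free:
if `u = b x = y b`, its rotations `b y` and `x b` are smaller than `u` exactly when `y < x` and
`x < y` respectively, as `x` and `y` have the same length.
-/

section Periodicity

variable {α : Type u} {v : List α} {p : ℕ}

lemma hasPeriodLen_length_succ (v : List α) : HasPeriodLen v (v.length + 1) :=
  ⟨by omega, fun _ hk => by omega⟩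

lemma hasPeriodLen_minPeriod (v : List α) : HasPeriodLen v (minPeriod v) :=
  Nat.sInf_mem (s := {p | HasPeriodLen v p}) ⟨_, hasPeriodLen_length_succ v⟩

lemma minPeriod_le {q : ℕ} (h : HasPeriodLen v q) : minPeriod v ≤ q :=
  Nat.sInf_le h

lemma HasPeriodLen.getElem?_mod (hp : HasPeriodLen v p) {m : ℕ} (hm : m < v.length) :
    v[m]? = v[m % p]? := by
  have hp1 := hp.1
  induction m using Nat.strong_induction_on with
  | _ m ih =>
    by_cases hmp : m < p
    · rw [Nat.mod_eq_of_lt hmp]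
    · have hshift := hp.2 (m - p) (by omega)
      rw [Nat.sub_add_cancel (by omega)] at hshift
      rw [Nat.mod_eq_sub_mod (by omega), ← ih (m - p) (by omega) (by omega), hshift]

lemma HasPeriodLen.drop_add_prefix (hp : HasPeriodLen v p) (e : ℕ) :
    v.drop (e + p) <+: v.drop e := by
  rw [List.prefix_iff_eq_take]
  apply List.ext_getElem?
  intro n
  rw [List.getElem?_take, List.getElem?_drop, List.getElem?_drop, List.length_drop]
  split_ifs with hn
  · rw [hp.2 (e + n) (by omega), add_right_comm]
  · exact List.getElem?_eq_none (by omega)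

lemma HasPeriodLen.drop_take_eq_rotate (hp : HasPeriodLen v p) {e : ℕ} (he : e + p ≤ v.length) :
    (v.drop e).take p = (v.take p).rotate e := by
  have hlen : (v.take p).length = p := by simp only [List.length_take]; omega
  apply List.ext_getElem?
  intro n
  by_cases hn : n < p
  · rw [List.getElem?_take_of_lt hn, List.getElem?_drop, List.getElem?_rotate (by omega), hlen,
      List.getElem?_take_of_lt (Nat.mod_lt _ (by omega)), hp.getElem?_mod (by omega), add_comm]
  · rw [List.getElem?_eq_none (by simp only [List.length_take]; omega),
      List.getElem?_eq_none (by simp only [List.length_rotate]; omega)]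

lemma HasPeriodLen.of_rotate_take_eq (hp : HasPeriodLen v p) (hpv : p ≤ v.length) {t : ℕ}
    (ht : 1 ≤ t) (hrot : (v.take p).rotate t = v.take p) : HasPeriodLen v t := by
  have hlen : (v.take p).length = p := by simp only [List.length_take]; omega
  have hmod : ∀ m, m < v.length → v[m]? = (v.take p)[m % p]? := fun m hm => by
    rw [hp.getElem?_mod hm, List.getElem?_take_of_lt (Nat.mod_lt _ hp.1)]
  refine ⟨ht, fun m hm => ?_⟩
  have hmp : m % p < p := Nat.mod_lt _ hp.1
  calc v[m]? = ((v.take p).rotate t)[m % p]? := by rw [hrot, hmod m (by omega)]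
    _ = v[m + t]? := by
      rw [List.getElem?_rotate (by omega), hlen, Nat.mod_add_mod, hmod (m + t) hm]

end Periodicity

section Lex

variable {α : Type u} [LinearOrder α]

lemma lt_of_prefix_of_length_lt {l₁ l₂ : List α} (h : l₁ <+: l₂)
    (hl : l₁.length < l₂.length) : l₁ < l₂ :=
  List.lt_iff_exists.2 (Or.inl ⟨List.prefix_iff_eq_take.1 h, hl⟩)

lemma take_le_take_of_lt {l₁ l₂ : List α} (h : l₁ < l₂) (n : ℕ) : l₁.take n ≤ l₂.take n := by
  replace h : List.Lex (· < ·) l₁ l₂ := h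
  induction h generalizing n with
  | nil => cases n with
    | zero => exact le_rfl
    | succ n => exact le_of_lt (List.Lex.nil : List.Lex (· < ·) _ _)
  | rel hab => cases n with
    | zero => exact le_rfl
    | succ n => exact le_of_lt (List.Lex.rel hab : List.Lex (· < ·) _ _)
  | cons _ ih => cases n with
    | zero => exact le_rfl
    | succ n => exact List.cons_le_cons _ (ih n)

lemma append_lt_append_of_lt_of_length_eq {x y : List α} (h : x < y)
    (hl : x.length = y.length) (s t : List α) : x ++ s < y ++ t := by
  replace h : List.Lex (· < ·) x y := h
  induction h with
  | nil => simp at hl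
  | rel hab => exact List.Lex.rel hab
  | cons _ ih => exact List.Lex.cons (ih (by simpa using hl))

lemma borderFree_of_rotate_lt {u : List α}
    (h : ∀ t, 0 < t → t < u.length → u.rotate t < u) : BorderFree u := by
  rintro b ⟨hbne, hbu, ⟨x, rfl⟩, ⟨y, hy⟩⟩
  have hlen : y.length = x.length := by
    have := congrArg List.length hy
    simp only [List.length_append] at this
    omega
  have hx : 0 < x.length := List.length_pos_iff.2 (by rintro rfl; simp at hbu)
  have hb : 0 < b.length := List.length_pos_iff.2 hbne
  have hyx : b ++ y < b ++ x := by
    have := h y.length (by omega) (by simp only [List.length_append]; omega)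
    rwa [← hy, List.rotate_append_length_eq, hy] at this
  have hxy : x ++ b < y ++ b := by
    have := h b.length hb (by simp only [List.length_append]; omega)
    rwa [List.rotate_append_length_eq, ← hy] at this
  rcases lt_trichotomy x y with hlt | rfl | hgt
  · exact lt_asymm hyx (List.append_left_lt hlt)
  · exact lt_irrefl _ hxy
  · exact lt_asymm hxy (append_lt_append_of_lt_of_length_eq hgt hlen b b)

end Lex

section GreatestSuffix

variable {α : Type u}

lemma factor_length_sub_one (v : List α) (e : ℕ) : factor v e (v.length - 1) = v.drop e := by
  unfold factor
  rw [List.take_of_length_le]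
  simp only [List.length_drop]
  omega

lemma length_factor {w : List α} {i j : ℕ} (hij : i ≤ j) (hj : j < w.length) :
    (factor w i j).length = j - i + 1 := by
  simp only [factor, List.length_take, List.length_drop]
  omega

lemma drop_factor (w : List α) {i j c : ℕ} (hc : c ≤ j - i) :
    (factor w i j).drop c = factor w (i + c) j := by
  simp only [factor, List.drop_take, List.drop_drop]
  congr 1
  omega

lemma IsGreatestProperSuffixPos.to_factor {lt : List α → List α → Prop} {w : List α} {i j k : ℕ}
    (hk : IsGreatestProperSuffixPos lt w i j k) (hj : j < w.length) :
    IsGreatestProperSuffixPos lt (factor w i j) 0 ((factor w i j).length - 1) (k - i) := by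
  obtain ⟨hik, hkj, hmax⟩ := hk
  have hl := length_factor (i := i) (by omega) hj
  refine ⟨by omega, by omega, fun e he hej hek => ?_⟩
  rw [factor_length_sub_one, factor_length_sub_one, drop_factor w (by omega),
    drop_factor w (by omega), show i + (k - i) = k by omega]
  exact hmax (i + e) (by omega) (by omega) (by omega)

variable [LinearOrder α] {v : List α} {c : ℕ}

lemma IsGreatestProperSuffixPos.drop_lt
    (hc : IsGreatestProperSuffixPos (List.Lex (· < ·)) v 0 (v.length - 1) c) {e : ℕ}
    (he : 0 < e) (hev : e < v.length) (hec : e ≠ c) : v.drop e < v.drop c := by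
  have := hc.2.2 e he (by omega) hec
  rwa [factor_length_sub_one, factor_length_sub_one] at this

lemma IsGreatestProperSuffixPos.le_minPeriod
    (hc : IsGreatestProperSuffixPos (List.Lex (· < ·)) v 0 (v.length - 1) c) :
    c ≤ minPeriod v := by
  have hp := hasPeriodLen_minPeriod v
  generalize minPeriod v = p at hp ⊢
  have hp1 := hp.1
  by_contra! hpc
  have hprefix := hp.drop_add_prefix (c - p)
  rw [Nat.sub_add_cancel hpc.le] at hprefix
  have hcv : c < v.length := by have := hc.2.1; omega
  have hlt : v.drop c < v.drop (c - p) :=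
    lt_of_prefix_of_length_lt hprefix (by simp only [List.length_drop]; omega)
  exact lt_asymm hlt (hc.drop_lt (by omega) (by omega) (by omega))

lemma IsGreatestProperSuffixPos.rotate_take_minPeriod_lt
    (hc : IsGreatestProperSuffixPos (List.Lex (· < ·)) v 0 (v.length - 1) c)
    (h2 : 2 * minPeriod v ≤ v.length) {t : ℕ} (ht : 0 < t) (htp : t < minPeriod v) :
    ((v.drop c).take (minPeriod v)).rotate t < (v.drop c).take (minPeriod v) := by
  set p := minPeriod v
  set r := v.take p
  have hp := hasPeriodLen_minPeriod v
  have hcp := hc.le_minPeriod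
  have hc0 := hc.1
  have hr : r.length = p := by simp only [r, List.length_take]; omega
  obtain ⟨e, he0, hep, hec, hre⟩ :
      ∃ e, 0 < e ∧ e ≤ p ∧ e ≠ c ∧ r.rotate (c + t) = r.rotate e := by
    by_cases hct : c + t ≤ p
    · exact ⟨c + t, by omega, hct, by omega, rfl⟩
    · refine ⟨c + t - p, by omega, by omega, by omega, ?_⟩
      rw [← List.rotate_mod r (c + t), ← List.rotate_mod r (c + t - p), hr,
        Nat.mod_eq_sub_mod (a := c + t) (by omega)]
  have hle : r.rotate (c + t) ≤ r.rotate c := by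
    rw [hre, ← hp.drop_take_eq_rotate (by omega), ← hp.drop_take_eq_rotate (by omega)]
    exact take_le_take_of_lt (hc.drop_lt he0 (by omega) hec) p
  have hne : r.rotate (c + t) ≠ r.rotate c := fun heq => by
    rw [add_comm, ← List.rotate_rotate, List.rotate_eq_rotate] at heq
    exact absurd (minPeriod_le (hp.of_rotate_take_eq (by omega) ht heq)) (by omega)
  rw [hp.drop_take_eq_rotate (by omega), List.rotate_rotate]
  exact lt_of_le_of_ne hle hne

theorem IsGreatestProperSuffixPos.borderFree_take_minPeriod
    (hc : IsGreatestProperSuffixPos (List.Lex (· < ·)) v 0 (v.length - 1) c)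
    (h2 : 2 * minPeriod v ≤ v.length) : BorderFree ((v.drop c).take (minPeriod v)) := by
  refine borderFree_of_rotate_lt fun t ht htl => hc.rotate_take_minPeriod_lt h2 ht ?_
  simp only [List.length_take, List.length_drop] at htl
  omega

theorem borderFree_factor_of_isGreatestProperSuffixPos {w : List α} {i j k : ℕ}
    (hj : j < w.length) (h2 : 2 * minPeriod (factor w i j) ≤ j - i + 1)
    (hk : IsGreatestProperSuffixPos (List.Lex (· < ·)) w i j k) :
    BorderFree (factor w k (k + minPeriod (factor w i j) - 1)) := by
  have hik := hk.1
  have hkj := hk.2.1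
  have hl := length_factor (i := i) (by omega) hj
  have hv := hk.to_factor hj
  have hcp := hv.le_minPeriod
  have hp := (hasPeriodLen_minPeriod (factor w i j)).1
  convert hv.borderFree_take_minPeriod (by omega) using 1
  rw [drop_factor w (by omega), show i + (k - i) = k by omega]
  generalize minPeriod (factor w i j) = p at hcp hp h2 ⊢
  simp only [factor, List.take_take]
  congr 1
  omega

end GreatestSuffix

/-- If `w[k..j]` is the greatest proper suffix of the factor of a run of smallest period
`p` (with respect to some lexicographic order), then its length-`p` prefix `w[k..k+p-1]`
is border-free. -/
theorem greatest_proper_suffix_prefix_borderFree {α : Type u} [LinearOrder α]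
    (w : List α) (i j k : ℕ) (h : IsRun w i j)
    (hk : IsGreatestProperSuffixPos (List.Lex (· < ·)) w i j k ∨
          IsGreatestProperSuffixPos (List.Lex (· > ·)) w i j k) :
    BorderFree (factor w k (k + minPeriod (factor w i j) - 1)) := by
  obtain ⟨-, hj, h2, -, -⟩ := h
  rcases hk with hk | hk
  · exact borderFree_factor_of_isGreatestProperSuffixPos hj h2 hk
  · exact borderFree_factor_of_isGreatestProperSuffixPos (α := αᵒᵈ) hj h2 hk
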